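/- Let p be a prime. If H is a finite group with a normal p'-subgroup K and Q is a p-subgroup of H, then N_{H/K}(QK/K) = N_H(Q)·K/K. -/

import Mathlib

open Subgroup Pointwise

private lemma mem_normalizer_iff_conj_smul {G : Type*} [Group G] {S : Subgroup G} {x : G} :
    x ∈ normalizer (S : Set G) ↔ MulAut.conj x • S = S := by
  rw [Subgroup.mem_normalizer_iff]
  constructor
  · intro h
    ext a
    rw [Subgroup.mem_pointwise_smul_iff_inv_smul_mem]
    have e1 : (MulAut.conj x)⁻¹ • a = x⁻¹ * a * x := by
      simp [MulAut.smul_def, MulAut.conj_apply, mul_assoc]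
    rw [e1]
    constructor
    · intro ha
      have h2 := (h (x⁻¹ * a * x)).mp ha
      have e2 : x * (x⁻¹ * a * x) * x⁻¹ = a := by group
      rwa [e2] at h2
    · intro ha
      apply (h (x⁻¹ * a * x)).mpr
      have e2 : x * (x⁻¹ * a * x) * x⁻¹ = a := by group
      rwa [e2]
  · intro h n
    constructor
    · intro hn
      rw [← h]
      exact ⟨n, hn, rfl⟩
    · intro hn
      rw [← h, Subgroup.mem_pointwise_smul_iff_inv_smul_mem] at hn
      have e1 : (MulAut.conj x)⁻¹ • (x * n * x⁻¹) = n := by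
        simp [MulAut.smul_def, MulAut.conj_apply, mul_assoc]
      rwa [e1] at hn

private lemma aux_not_dvd (p : ℕ) [hp : Fact p.Prime] {H : Type} [Group H] [Finite H]
    (K : Subgroup H) [K.Normal] (hK : ¬ p ∣ Nat.card K) (Q : Subgroup H) (hQ : IsPGroup p Q)
    (n : ℕ) (hn : n * Nat.card Q = Nat.card ↥(K ⊔ Q)) : ¬ p ∣ n := by
  obtain ⟨m, hm⟩ := (IsPGroup.iff_card).mp hQ
  have h1 : K.relIndex Q * Nat.card K = Nat.card ↥(K ⊔ Q) := by
    have h := Subgroup.index_mul_card (K.subgroupOf (K ⊔ Q))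
    rwa [Nat.card_congr (Subgroup.subgroupOfEquivOfLe (le_sup_left : K ≤ K ⊔ Q)).toEquiv,
      show (K.subgroupOf (K ⊔ Q)).index = K.relIndex (K ⊔ Q) from rfl,
      Subgroup.relIndex_sup_left] at h
  have h2 : K.relIndex Q ∣ Nat.card Q := Subgroup.index_dvd_card (K.subgroupOf Q)
  obtain ⟨a, ham, ha⟩ := (Nat.dvd_prime_pow hp.out).mp (hm ▸ h2)
  intro hdvd
  have hd1 : p ^ (m + 1) ∣ n * Nat.card Q := by
    rw [hm, pow_succ']
    exact mul_dvd_mul hdvd dvd_rfl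
  rw [hn, ← h1, ha] at hd1
  have hcop : (p ^ (m + 1)).Coprime (Nat.card K) :=
    Nat.Coprime.pow_left _ ((Nat.Prime.coprime_iff_not_dvd hp.out).mpr hK)
  have hd2 : p ^ (m + 1) ∣ p ^ a := hcop.dvd_of_dvd_mul_right hd1
  have := (Nat.pow_dvd_pow_iff_le_right hp.out.one_lt).mp hd2
  omega

private lemma key_normalizer_sup (p : ℕ) [hp : Fact p.Prime] {H : Type} [Group H] [Finite H]
    (K : Subgroup H) [K.Normal] (hK : ¬ p ∣ Nat.card K) (Q : Subgroup H) (hQ : IsPGroup p Q) :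
    normalizer ((K ⊔ Q : Subgroup H) : Set H) = K ⊔ normalizer (Q : Set H) := by
  refine le_antisymm ?_ (sup_le (le_sup_left.trans Subgroup.le_normalizer) ?_)
  · intro x hx
    have hxL : MulAut.conj x • (K ⊔ Q) = K ⊔ Q := mem_normalizer_iff_conj_smul.mp hx
    set L : Subgroup H := K ⊔ Q with hL
    set Q' : Subgroup H := MulAut.conj x • Q with hQ'
    have hQL : Q ≤ L := le_sup_right
    have hQ'L : Q' ≤ L := by
      calc Q' ≤ MulAut.conj x • L := smul_mono_right _ hQL
        _ = L := hxL
    have cardQ' : Nat.card Q' = Nat.card Q :=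
      (Nat.card_congr (Subgroup.equivSMul (MulAut.conj x) Q).toEquiv).symm
    have hQ'pg : IsPGroup p Q' := hQ.map _
    have i1 : ¬ p ∣ (Q.subgroupOf L).index := by
      apply aux_not_dvd p K hK Q hQ
      have h := Subgroup.index_mul_card (Q.subgroupOf L)
      rwa [Nat.card_congr (Subgroup.subgroupOfEquivOfLe hQL).toEquiv] at h
    have i2 : ¬ p ∣ (Q'.subgroupOf L).index := by
      apply aux_not_dvd p K hK Q hQ
      have h := Subgroup.index_mul_card (Q'.subgroupOf L)
      rwa [Nat.card_congr (Subgroup.subgroupOfEquivOfLe hQ'L).toEquiv, cardQ'] at h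
    let S1 : Sylow p L := (hQ.comap_subtype).toSylow i1
    let S2 : Sylow p L := (hQ'pg.comap_subtype).toSylow i2
    obtain ⟨g, hg⟩ := MulAction.exists_smul_eq L S2 S1
    have hg' : MulAut.conj g • (Q'.subgroupOf L) = Q.subgroupOf L := by
      have := congr_arg (Sylow.toSubgroup) hg
      rw [Sylow.coe_subgroup_smul] at this
      exact this
    rw [Subgroup.conj_smul_subgroupOf hQ'L g] at hg'
    have hconj : MulAut.conj (g : H) • Q' = Q := by
      have := congr_arg (Subgroup.map L.subtype) hg'
      rwa [Subgroup.subgroupOf_map_subtype, Subgroup.subgroupOf_map_subtype,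
        inf_of_le_left (Subgroup.conj_smul_le_of_le hQ'L g), inf_of_le_left hQL] at this
    have hmem : (g : H) * x ∈ normalizer (Q : Set H) := by
      rw [mem_normalizer_iff_conj_smul, map_mul, mul_smul]
      exact hconj
    have hginL : (g : H) ∈ K ⊔ normalizer (Q : Set H) := by
      have : (g : H) ∈ L := g.2
      exact sup_le_sup_left Subgroup.le_normalizer K this
    have : x = (g : H)⁻¹ * ((g : H) * x) := by group
    rw [this]
    exact mul_mem (inv_mem hginL) (le_sup_right (a := K) hmem)
  · intro x hx
    rw [mem_normalizer_iff_conj_smul] at hx ⊢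
    rw [smul_sup, hx, Subgroup.Normal.conj_smul_eq_self]

/-- Normalizers of `p`-subgroups are preserved under quotients by normal
`p'`-subgroups: if `H` is a finite group, `K` a normal subgroup of order prime
to `p`, and `Q` a `p`-subgroup of `H`, then
`N_{H/K}(QK/K) = N_H(Q)·K/K`. -/
theorem normalizer_image_quotient_pPrime (p : ℕ) [Fact p.Prime]
    (H : Type) [Group H] [Finite H] (K : Subgroup H) [K.Normal]
    (hK : ¬ p ∣ Nat.card K) (Q : Subgroup H) (hQ : IsPGroup p Q) :
    Subgroup.normalizer ((Q.map (QuotientGroup.mk' K) : Subgroup (H ⧸ K)) : Set (H ⧸ K)) =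
      (K ⊔ Subgroup.normalizer (Q : Set H)).map (QuotientGroup.mk' K) := by
  apply Subgroup.comap_injective (QuotientGroup.mk'_surjective K)
  rw [Subgroup.comap_normalizer_eq_of_surjective _ (QuotientGroup.mk'_surjective K),
    Subgroup.comap_map_eq, Subgroup.comap_map_eq, QuotientGroup.ker_mk',
    sup_comm Q K, key_normalizer_sup p K hK Q hQ,
    sup_assoc, sup_comm (normalizer (Q : Set H)) K, ← sup_assoc, sup_idem]
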